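/- An H-module algebra R is H-semiprime if and only if for every non-zero a ∈ R there exists an H-m-sequence {aₙ} in R with a₁ = a such that aₙ ≠ 0 for all n. -/

import Mathlib

open scoped TensorProduct

class HModAlg (k H R : Type*) [CommRing k] [Ring H] [Algebra k H]
    [Coalgebra k H] [NonUnitalRing R] [Module k R]
    [SMulCommClass k R R] [IsScalarTower k R R] where
  hsmul : H →ₗ[k] R →ₗ[k] R
  one_hsmul : ∀ r : R, hsmul 1 r = r
  mul_hsmul : ∀ (h h' : H) (r : R), hsmul (h * h') r = hsmul h (hsmul h' r)
  hsmul_mul : ∀ (h : H) (a b : R),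
    hsmul h (a * b) =
      LinearMap.mul' k R
        (TensorProduct.map (hsmul.flip a) (hsmul.flip b) (Coalgebra.comul h))

/-- product f 0 * f 1 * ⋯ * f n -/
def prodSeq {R : Type*} [Mul R] (f : ℕ → R) : ℕ → R
  | 0 => f 0
  | n + 1 => prodSeq f n * f (n + 1)

/-- `I` is a nilpotent subset: some power of it vanishes. -/
def IsNilpotentSet {R : Type*} [Mul R] [Zero R] (I : Set R) : Prop :=
  ∃ n : ℕ, ∀ f : ℕ → R, (∀ i, f i ∈ I) → prodSeq f n = 0

/-- `I` is nilpotent modulo `J`. -/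
def IsNilpotentSetMod {R : Type*} [Mul R] (I J : Set R) : Prop :=
  ∃ n : ℕ, ∀ f : ℕ → R, (∀ i, f i ∈ I) → prodSeq f n ∈ J

section Defs

variable (k H : Type*) {R : Type*} [CommRing k] [Ring H] [Algebra k H]
  [Coalgebra k H] [NonUnitalRing R] [Module k R]
  [SMulCommClass k R R] [IsScalarTower k R R] [HModAlg k H R]

/-- The action of `h : H` on `r : R`. -/
def hact (h : H) (r : R) : R := HModAlg.hsmul (k := k) h r

/-- `I` is an `H`-ideal of the `H`-module (sub)algebra `B ⊆ R`. -/
structure IsHIdealIn (B I : Set R) : Prop where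
  subset : I ⊆ B
  zero_mem : (0 : R) ∈ I
  add_mem : ∀ {x y : R}, x ∈ I → y ∈ I → x + y ∈ I
  neg_mem : ∀ {x : R}, x ∈ I → -x ∈ I
  mul_mem_left : ∀ {x : R}, x ∈ B → ∀ {y : R}, y ∈ I → x * y ∈ I
  mul_mem_right : ∀ {x : R}, x ∈ I → ∀ {y : R}, y ∈ B → x * y ∈ I
  hsmul_mem : ∀ (h : H) {x : R}, x ∈ I → hact k H h x ∈ I

/-- `I` is an `H`-ideal of `R`. -/
def IsHIdeal (I : Set R) : Prop := IsHIdealIn k H Set.univ I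

/-- `R` is `H`-semiprime. -/
def IsHSemiprime : Prop :=
  ∀ I : Set R, IsHIdeal k H I → IsNilpotentSet I → I = {0}

/-- The subalgebra `B` of `R` is `H`-semiprime. -/
def IsHSemiprimeIn (B : Set R) : Prop :=
  ∀ I : Set R, IsHIdealIn k H B I → IsNilpotentSet I → I = {0}

/-- `R` is `H`-prime. -/
def IsHPrime : Prop :=
  ∀ I J : Set R, IsHIdeal k H I → IsHIdeal k H J →
    (∀ a ∈ I, ∀ b ∈ J, a * b = 0) → I = {0} ∨ J = {0}

/-- The `H`-ideal of `R` generated by `E`. -/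
def genHIdeal (E : Set R) : Set R := ⋂₀ {I : Set R | IsHIdeal k H I ∧ E ⊆ I}

end Defs

/-!
If `c ≠ 0` but `(h • c) * b * (h' • c) = 0` for all `h, h' ∈ H` and `b ∈ R`, then the two-sided
ideal spanned by `H • c` is an `H`-ideal whose cube vanishes. So in an `H`-semiprime algebra every
non-zero term of an `H`-m-sequence can be continued by a non-zero one. Conversely, the `n`-th term
of an `H`-m-sequence beginning in an `H`-ideal `I` lies in `I ^ (n + 1)`, the additive span of
`(n + 1)`-fold products of elements of `I`, which is again `H`-stable and a right ideal; if `I`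
is nilpotent, these powers vanish, and so does the sequence.
-/

open scoped Pointwise

theorem exists_seq_of_forall_exists {α : Type*} {p : α → Prop} {r : α → α → Prop}
    (step : ∀ x, p x → ∃ y, r x y ∧ p y) {a : α} (ha : p a) :
    ∃ s : ℕ → α, s 0 = a ∧ ∀ n, r (s n) (s (n + 1)) ∧ p (s n) := by
  choose f hf using step
  let t (n : ℕ) : {x // p x} := (fun x => ⟨f x.1 x.2, (hf x.1 x.2).2⟩)^[n] ⟨a, ha⟩
  refine ⟨fun n => (t n).1, rfl, fun n => ⟨?_, (t n).2⟩⟩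
  simp only [t, Function.iterate_succ_apply']
  exact (hf _ _).1

theorem prodSeq_congr {R : Type*} [Mul R] {f g : ℕ → R} :
    ∀ {n}, (∀ i ≤ n, f i = g i) → prodSeq f n = prodSeq g n
  | 0, h => h 0 le_rfl
  | n + 1, h => congr_arg₂ (· * ·) (prodSeq_congr fun i hi => h i (by omega)) (h (n + 1) le_rfl)

section PowSucc

variable {R : Type*} [NonUnitalSemiring R]

/-- `M.powSucc m` is `M ^ (m + 1)`, bracketed to the left like `prodSeq`. -/
def AddSubmonoid.powSucc (M : AddSubmonoid R) : ℕ → AddSubmonoid R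
  | 0 => M
  | m + 1 => M.powSucc m * M

namespace AddSubmonoid

variable {M : AddSubmonoid R}

theorem powSucc_le (hM : ∀ r, ∀ x ∈ M, r * x ∈ M) : ∀ m, M.powSucc m ≤ M
  | 0 => le_rfl
  | _ + 1 => mul_le.2 fun _ _ y hy => hM _ y hy

theorem mul_mem_powSucc (hM : ∀ x ∈ M, ∀ r, x * r ∈ M) {m : ℕ} {x : R}
    (hx : x ∈ M.powSucc m) (r : R) : x * r ∈ M.powSucc m := by
  cases m with
  | zero => exact hM x hx r
  | succ m =>
    refine AddSubmonoid.mul_induction_on hx (fun y hy z hz => ?_) fun y z hy hz => ?_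
    · rw [mul_assoc]
      exact mul_mem_mul hy (hM z hz r)
    · rw [add_mul]
      exact add_mem hy hz

theorem powSucc_le_closure_prodSeq (M : AddSubmonoid R) (m : ℕ) :
    M.powSucc m ≤ closure {x | ∃ f : ℕ → R, (∀ i, f i ∈ M) ∧ prodSeq f m = x} := by
  induction m with
  | zero => exact fun x hx => subset_closure ⟨fun _ => x, fun _ => hx, rfl⟩
  | succ m ih =>
    refine (mul_le_mul ih (closure_eq M).ge).trans ?_
    rw [closure_mul_closure]
    refine closure_mono ?_
    rintro _ ⟨_, ⟨f, hf, rfl⟩, y, hy, rfl⟩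
    refine ⟨fun i => if i ≤ m then f i else y, fun i => ?_, ?_⟩
    · dsimp only
      split_ifs
      exacts [hf i, hy]
    · simp only [prodSeq, Nat.not_succ_le_self, if_false]
      rw [prodSeq_congr fun i hi => if_pos hi]

theorem exists_powSucc_eq_bot (hM : IsNilpotentSet (M : Set R)) : ∃ n, M.powSucc n = ⊥ := by
  obtain ⟨n, hn⟩ := hM
  refine ⟨n, eq_bot_iff.2 ((powSucc_le_closure_prodSeq M n).trans (closure_le.2 ?_))⟩
  rintro _ ⟨f, hf, rfl⟩
  exact hn f hf

end AddSubmonoid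

end PowSucc

namespace TwoSidedIdeal

variable {R : Type*} [NonUnitalRing R]

theorem mul_mul_eq_zero_of_mem_span {S : Set R} (hS : ∀ s ∈ S, ∀ r, ∀ s' ∈ S, s * r * s' = 0)
    {p q w : R} (hp : p ∈ span S) (hq : q ∈ span S) (hw : w ∈ span S) : p * q * w = 0 := by
  have hSw : ∀ w ∈ span S, ∀ s ∈ S, ∀ r, s * r * w = 0 := by
    intro w hw
    induction hw using span_induction with
    | mem s' hs' => exact fun s hs r => hS s hs r s' hs'
    | zero => simp
    | add x y _ _ hx hy => intro s hs r; rw [mul_add, hx s hs r, hy s hs r, add_zero]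
    | neg x _ hx => intro s hs r; rw [mul_neg, hx s hs r, neg_zero]
    | left_absorb a x _ hx => intro s hs r; rw [← mul_assoc, mul_assoc s, hx s hs]
    | right_absorb b x _ hx => intro s hs r; rw [← mul_assoc, hx s hs r, zero_mul]
  induction hp using span_induction generalizing q w with
  | mem s hs => rw [hSw w hw s hs q]
  | zero => simp
  | add x y _ _ hx hy => rw [add_mul, add_mul, hx hq hw, hy hq hw, add_zero]
  | neg x _ hx => rw [neg_mul, neg_mul, hx hq hw, neg_zero]
  | left_absorb a x _ hx => rw [mul_assoc, mul_assoc, ← mul_assoc x, hx hq hw, mul_zero]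
  | right_absorb b x _ hx => rw [mul_assoc x, hx (mul_mem_left _ b q hq) hw]

end TwoSidedIdeal

section HModAlg

variable {k H R : Type*} [CommRing k] [Ring H] [Algebra k H] [Coalgebra k H]
  [NonUnitalRing R] [Module k R] [SMulCommClass k R R] [IsScalarTower k R R] [HModAlg k H R]

theorem hact_one (r : R) : hact k H 1 r = r := HModAlg.one_hsmul r

theorem hact_hact (h h' : H) (r : R) : hact k H h (hact k H h' r) = hact k H (h * h') r :=
  (HModAlg.mul_hsmul h h' r).symm

theorem hact_zero (h : H) : hact k H h (0 : R) = 0 := map_zero _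

theorem hact_add (h : H) (x y : R) : hact k H h (x + y) = hact k H h x + hact k H h y :=
  map_add _ _ _

theorem hact_neg (h : H) (x : R) : hact k H h (-x) = -hact k H h x := map_neg _ _

theorem hact_mul_mem {S : Type*} [SetLike S R] [AddSubmonoidClass S R] (M : S) (h : H) {u v : R}
    (huv : ∀ h₁ h₂ : H, hact k H h₁ u * hact k H h₂ v ∈ M) : hact k H h (u * v) ∈ M := by
  rw [hact, HModAlg.hsmul_mul]
  induction Coalgebra.comul (R := k) h using TensorProduct.induction_on with
  | zero => simp
  | tmul h₁ h₂ => exact huv h₁ h₂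
  | add x y hx hy => rw [map_add, map_add]; exact add_mem hx hy

theorem TwoSidedIdeal.isHIdeal_of_hact_mem (J : TwoSidedIdeal R)
    (hJ : ∀ h, ∀ x ∈ J, hact k H h x ∈ J) : IsHIdeal k H (J : Set R) where
  subset := Set.subset_univ _
  zero_mem := J.zero_mem
  add_mem := J.add_mem
  neg_mem := J.neg_mem
  mul_mem_left _ := J.mul_mem_left _ _
  mul_mem_right hx _ _ := J.mul_mem_right _ _ hx
  hsmul_mem := hJ

theorem TwoSidedIdeal.hact_mem_span {S : Set R} (hS : ∀ h, ∀ s ∈ S, hact k H h s ∈ S) (h : H)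
    {x : R} (hx : x ∈ span S) : hact k H h x ∈ span S := by
  induction hx using span_induction generalizing h with
  | mem s hs => exact subset_span (hS h s hs)
  | zero => rw [hact_zero]; exact zero_mem _
  | add x y _ _ hx hy => rw [hact_add]; exact add_mem _ (hx h) (hy h)
  | neg x _ hx => rw [hact_neg]; exact neg_mem _ (hx h)
  | left_absorb a x _ hx => exact hact_mul_mem _ h fun _ h₂ => mul_mem_left _ _ _ (hx h₂)
  | right_absorb b x _ hx => exact hact_mul_mem _ h fun h₁ _ => mul_mem_right _ _ _ (hx h₁)

/-- Otherwise the `H`-ideal generated by `c` would have cube zero. -/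
theorem exists_hact_mul_hact_ne_zero (hR : IsHSemiprime k H (R := R)) {c : R} (hc : c ≠ 0) :
    ∃ h h' b, hact k H h c * b * hact k H h' c ≠ 0 := by
  by_contra! hzero
  set S := Set.range fun h : H => hact k H h c
  have hS_stable : ∀ h, ∀ s ∈ S, hact k H h s ∈ S := by
    rintro h _ ⟨h', rfl⟩
    exact ⟨h * h', (hact_hact h h' c).symm⟩
  have hS_zero : ∀ s ∈ S, ∀ r, ∀ s' ∈ S, s * r * s' = 0 := by
    rintro _ ⟨h, rfl⟩ r _ ⟨h', rfl⟩
    exact hzero h h' r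
  have hspan : (TwoSidedIdeal.span S : Set R) = {0} :=
    hR _ ((TwoSidedIdeal.span S).isHIdeal_of_hact_mem (TwoSidedIdeal.hact_mem_span hS_stable))
      ⟨2, fun f hf => TwoSidedIdeal.mul_mul_eq_zero_of_mem_span hS_zero (hf 0) (hf 1) (hf 2)⟩
  have hc_mem : c ∈ (TwoSidedIdeal.span S : Set R) := TwoSidedIdeal.subset_span ⟨1, hact_one c⟩
  exact hc (by rwa [hspan] at hc_mem)

theorem AddSubmonoid.hact_mem_powSucc {M : AddSubmonoid R} (hM : ∀ h, ∀ x ∈ M, hact k H h x ∈ M)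
    (h : H) {m : ℕ} {x : R} (hx : x ∈ M.powSucc m) : hact k H h x ∈ M.powSucc m := by
  induction m generalizing h x with
  | zero => exact hM h x hx
  | succ m ih =>
    refine AddSubmonoid.mul_induction_on hx (fun y hy z hz => ?_) fun y z hy hz => ?_
    · exact hact_mul_mem _ h fun h₁ h₂ => AddSubmonoid.mul_mem_mul (ih h₁ hy) (hM h₂ z hz)
    · rw [hact_add]
      exact add_mem hy hz

theorem mem_powSucc_of_mseq {M : AddSubmonoid R} (hM : IsHIdeal k H (M : Set R))
    {s b : ℕ → R} {h h' : ℕ → H} (hs0 : s 0 ∈ M)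
    (hs : ∀ n, s (n + 1) = hact k H (h n) (s n) * b n * hact k H (h' n) (s n)) :
    ∀ n, s n ∈ M.powSucc n
  | 0 => hs0
  | n + 1 => by
    have hsn := mem_powSucc_of_mseq hM hs0 hs n
    rw [hs n]
    refine AddSubmonoid.mul_mem_mul (M.mul_mem_powSucc (fun x hx r => hM.mul_mem_right hx trivial)
      (M.hact_mem_powSucc hM.hsmul_mem (h n) hsn) (b n)) ?_
    exact M.powSucc_le (fun r x hx => hM.mul_mem_left trivial hx) n
      (M.hact_mem_powSucc hM.hsmul_mem (h' n) hsn)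

end HModAlg

/-- `R` is `H`-semiprime iff every non-zero `a` begins an
`H`-`m`-sequence all of whose terms are non-zero. -/
theorem stmt7 {k H R : Type*} [CommRing k] [Ring H] [Algebra k H] [Coalgebra k H]
    [NonUnitalRing R] [Module k R] [SMulCommClass k R R] [IsScalarTower k R R]
    [HModAlg k H R] :
    IsHSemiprime k H (R := R) ↔
      ∀ a : R, a ≠ 0 →
        ∃ (s b : ℕ → R) (h h' : ℕ → H),
          s 0 = a ∧
          (∀ n, s (n + 1) = hact k H (h n) (s n) * b n * hact k H (h' n) (s n)) ∧
          ∀ n, s n ≠ 0 := by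
  constructor
  · intro hR a ha
    obtain ⟨s, rfl, hs⟩ := exists_seq_of_forall_exists
      (p := fun c : R => c ≠ 0) (r := fun c d => ∃ h h' b, d = hact k H h c * b * hact k H h' c)
      (fun c hc => have ⟨h, h', b, hne⟩ := exists_hact_mul_hact_ne_zero hR hc
        ⟨_, ⟨h, h', b, rfl⟩, hne⟩) ha
    choose h h' b hb using fun n => (hs n).1
    exact ⟨s, b, h, h', rfl, hb, fun n => (hs n).2⟩
  · intro hseq I hI hnil
    let M : AddSubmonoid R := ⟨⟨I, hI.add_mem⟩, hI.zero_mem⟩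
    obtain ⟨n, hn⟩ := AddSubmonoid.exists_powSucc_eq_bot (M := M) hnil
    refine Set.eq_singleton_iff_unique_mem.2 ⟨hI.zero_mem, fun a ha => by_contra fun ha0 => ?_⟩
    obtain ⟨s, b, h, h', rfl, hs, hs_ne⟩ := hseq a ha0
    have hsn := mem_powSucc_of_mseq (M := M) hI ha hs n
    rw [hn, AddSubmonoid.mem_bot] at hsn
    exact hs_ne n hsn
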